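/- arXiv:1704.02790 — 2 statements merged into one kernel-verified Lean document; each statement's English description precedes it below -/
import Mathlib

section
/- Let N ≥ 1, R > 0, γ̄ > 0, and let (γ_{k,u})_{1≤k≤N, u∈ℕ} be mutually independent exponential random variables with mean γ̄. Define 𝒮_k(τ,t) = Π_{u=τ}^{t−1}(1+γ_{k,u}) and 𝒮_net(τ,t) = min over chains τ = u₀ ≤ u₁ ≤ ⋯ ≤ u_N = t of Π_{k=1}^{N} 𝒮_k(u_{k−1},u_k). Let (D(0,t))_{t∈ℕ} be real-valued random variables with D(0,0) = 0 satisfying almost surely e^{D(0,t)} ≥ min_{0≤u≤t} e^{R·u} · 𝒮_net(u,t) for every t. Define B(τ) = R·τ − D(0,τ) and D(τ,t) = D(0,t) − D(0,τ). Let V(1−s) = e^{(1−s)R} · e^{1/γ̄} · γ̄^{\,s−1} · Γ(s, 1/γ̄), with Γ(s,a) = ∫_a^∞ x^{s−1}e^{−x}dx. Then for every natural number τ, every T_D ∈ ℕ, every real d ≥ 0, and every real s < 1 with V(1−s) < 1: P( D(τ, τ+T_D) − B(τ) ≤ d ) ≤ e^{(s−1)( R·T_D − d )} / ( 1 − V(1−s)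 )^{N}. -/
open MeasureTheory ProbabilityTheory

/-- The network SNR service process of an `N`-hop path of fading channels: the minimum over
all monotone chains `τ = u₀ ≤ u₁ ≤ ⋯ ≤ u_N = t` of `Π_k 𝒮_k(u_{k−1},u_k)`, where
`𝒮_k(τ,t) = Π_{u=τ}^{t−1} (1+γ_{k,u})`. -/
noncomputable def Snet {Ω : Type*} (N : ℕ) (γ : Fin N → ℕ → Ω → ℝ)
    (τ t : ℕ) (ω : Ω) : ℝ :=
  sInf { y : ℝ | ∃ u : Fin (N + 1) → ℕ, Monotone u ∧ u 0 = τ ∧ u (Fin.last N) = t ∧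
    y = ∏ k : Fin N, ∏ v ∈ Finset.Ico (u k.castSucc) (u k.succ), (1 + γ k v ω) }

/-!
With `t = τ + T_D` the event is `D(0,t) ≤ Rτ + d`, so the min-plus envelope forces a monotone chain
`u = u₀ ≤ ⋯ ≤ u_N = t` with `R u + Σ log (1 + γ_{k,v}) ≤ Rτ + d`, the sum running over the `t - u`
slots served along the chain. By independence, a Chernoff bound with exponent `1 - s` bounds the
probability for one chain by `e^{(s-1)(R T_D - d)} V^{t-u}`; the Mellin transform
`E[(1 + γ)^{s-1}] = e^{1/γ̄} γ̄^{s-1} Γ(s, 1/γ̄)` comes from the substitution `y = (1 + x)/γ̄`.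
A chain is determined by its endpoint and its gaps, so the sum over all chains is at most the
`N`-fold product of geometric series `Σ_n V^n ≤ 1/(1 - V)`.
-/

open Real Finset

section Chains

variable {N : ℕ}

open Classical in
noncomputable def monotoneChains (N t : ℕ) : Finset (Fin (N + 1) → ℕ) :=
  (Fintype.piFinset fun _ => range (t + 1)).filter fun f => Monotone f ∧ f (Fin.last N) = t

theorem mem_monotoneChains {t : ℕ} {f : Fin (N + 1) → ℕ} :
    f ∈ monotoneChains N t ↔ Monotone f ∧ f (Fin.last N) = t := by
  simp only [monotoneChains, mem_filter, Fintype.mem_piFinset, mem_range, and_iff_right_iff_imp]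
  rintro ⟨hf, rfl⟩ i
  exact Nat.lt_succ_of_le (hf (Fin.le_last i))

def chainGaps (f : Fin (N + 1) → ℕ) (k : Fin N) : ℕ := f k.succ - f k.castSucc

theorem sum_chainGaps {f : Fin (N + 1) → ℕ} (hf : Monotone f) :
    ∑ k, chainGaps f k = f (Fin.last N) - f 0 := by
  induction N with
  | zero => simp
  | succ n ih =>
    have hsum : ∑ i : Fin n, chainGaps f i.castSucc = f (Fin.last n).castSucc - f 0 :=
      ih (hf.comp Fin.strictMono_castSucc.monotone)
    have h0 := hf (Fin.zero_le (Fin.last n).castSucc)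
    have h1 := hf (Fin.castSucc_le_succ (Fin.last n))
    rw [Fin.sum_univ_castSucc, hsum, chainGaps]
    simp only [Fin.succ_last, Nat.succ_eq_add_one] at h1 ⊢
    omega

theorem eq_of_chainGaps_eq {f g : Fin (N + 1) → ℕ} (hf : Monotone f) (hg : Monotone g)
    (hlast : f (Fin.last N) = g (Fin.last N)) (h : chainGaps f = chainGaps g) : f = g := by
  funext i
  induction i using Fin.reverseInduction with
  | last => exact hlast
  | cast k ih =>
    have hk := congrFun h k
    have := hf (Fin.castSucc_le_succ k)
    have := hg (Fin.castSucc_le_succ k)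
    simp only [chainGaps] at hk
    omega

theorem sum_monotoneChains_pow_le {V : ℝ} (h0 : 0 ≤ V) (h1 : V < 1) (t : ℕ) :
    ∑ f ∈ monotoneChains N t, V ^ (t - f 0) ≤ ((1 - V) ^ N)⁻¹ := by
  have hinj : Set.InjOn chainGaps (monotoneChains N t : Set (Fin (N + 1) → ℕ)) := by
    intro f hf g hg hfg
    obtain ⟨hf, hft⟩ := mem_monotoneChains.1 hf
    obtain ⟨hg, hgt⟩ := mem_monotoneChains.1 hg
    exact eq_of_chainGaps_eq hf hg (hft.trans hgt.symm) hfg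
  have himage : (monotoneChains N t).image chainGaps ⊆ Fintype.piFinset fun _ => range (t + 1) := by
    simp only [subset_iff, mem_image, Fintype.mem_piFinset, mem_range, forall_exists_index]
    rintro _ f ⟨hf, rfl⟩ k
    obtain ⟨hmono, rfl⟩ := mem_monotoneChains.1 hf
    exact Nat.lt_succ_of_le ((Nat.sub_le _ _).trans (hmono (Fin.le_last _)))
  have hgeom : ∑ n ∈ range (t + 1), V ^ n ≤ (1 - V)⁻¹ := by
    simpa [← range_eq_Ico] using geom_sum_Ico_le_of_lt_one (m := 0) (n := t + 1) h0 h1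
  calc ∑ f ∈ monotoneChains N t, V ^ (t - f 0)
      = ∑ f ∈ monotoneChains N t, ∏ k, V ^ chainGaps f k := sum_congr rfl fun f hf => by
        obtain ⟨hmono, hlast⟩ := mem_monotoneChains.1 hf
        rw [prod_pow_eq_pow_sum, sum_chainGaps hmono, hlast]
    _ = ∑ g ∈ (monotoneChains N t).image chainGaps, ∏ k, V ^ g k :=
        (sum_image (f := fun g => ∏ k, V ^ g k) hinj).symm
    _ ≤ ∑ g ∈ Fintype.piFinset fun _ => range (t + 1), ∏ k, V ^ g k :=
        sum_le_sum_of_subset_of_nonneg himage fun _ _ _ => by positivity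
    _ = ∏ _k : Fin N, ∑ n ∈ range (t + 1), V ^ n := (prod_univ_sum _ _).symm
    _ ≤ ∏ _k : Fin N, (1 - V)⁻¹ := prod_le_prod (fun _ _ => by positivity) fun _ _ => hgeom
    _ = ((1 - V) ^ N)⁻¹ := by simp

def chainCells (f : Fin (N + 1) → ℕ) : Finset (Fin N × ℕ) :=
  univ.biUnion fun k => {k} ×ˢ Ico (f k.castSucc) (f k.succ)

theorem sum_chainCells {M : Type*} [AddCommMonoid M] (f : Fin (N + 1) → ℕ) (g : Fin N × ℕ → M) :
    ∑ p ∈ chainCells f, g p = ∑ k, ∑ v ∈ Ico (f k.castSucc) (f k.succ), g (k, v) :=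
  sum_finset_product _ _ _ fun p => by
    simp only [chainCells, mem_biUnion, mem_univ, true_and, mem_product, mem_singleton,
      exists_eq_left']

theorem card_chainCells {f : Fin (N + 1) → ℕ} (hf : Monotone f) :
    #(chainCells f) = f (Fin.last N) - f 0 := by
  rw [card_eq_sum_ones, sum_chainCells, ← sum_chainGaps hf]
  simp [chainGaps]

end Chains

section ServiceProcess

variable {Ω : Type*} {N : ℕ}

theorem exists_chain_eq_Snet (hN : 1 ≤ N) (γ : Fin N → ℕ → Ω → ℝ) (ω : Ω) {u t : ℕ}
    (hut : u ≤ t) :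
    ∃ f ∈ monotoneChains N t, f 0 = u ∧
      Snet N γ u t ω = ∏ k, ∏ v ∈ Ico (f k.castSucc) (f k.succ), (1 + γ k v ω) := by
  set chainProd : (Fin (N + 1) → ℕ) → ℝ :=
    fun f => ∏ k, ∏ v ∈ Ico (f k.castSucc) (f k.succ), (1 + γ k v ω)
  set S : Set ℝ := {y | ∃ f : Fin (N + 1) → ℕ, Monotone f ∧ f 0 = u ∧ f (Fin.last N) = t ∧
    y = chainProd f}
  have hfinite : S.Finite := by
    refine ((monotoneChains N t).finite_toSet.image chainProd).subset ?_
    rintro _ ⟨f, hf, -, hlast, rfl⟩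
    exact ⟨f, mem_monotoneChains.2 ⟨hf, hlast⟩, rfl⟩
  have hnonempty : S.Nonempty := by
    have hlast : Fin.last N ≠ 0 := by rw [Ne, Fin.ext_iff, Fin.val_last, Fin.val_zero]; omega
    refine ⟨_, fun i => if i = 0 then u else t, fun i j hij => ?_, if_pos rfl, if_neg hlast, rfl⟩
    by_cases hj : j = 0
    · subst hj
      simp [Fin.le_zero_iff.1 hij]
    · dsimp only
      split_ifs <;> omega
  obtain ⟨f, hf, h0, hlast, hmin⟩ := hnonempty.csInf_mem hfinite
  exact ⟨f, mem_monotoneChains.2 ⟨hf, hlast⟩, h0, hmin⟩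

theorem exists_chain_of_inf'_le_exp (hN : 1 ≤ N) {γ : Fin N → ℕ → Ω → ℝ} {ω : Ω}
    (hγ : ∀ k v, 0 ≤ γ k v ω) {R b : ℝ} {t : ℕ}
    (h : (Icc 0 t).inf' (nonempty_Icc.mpr (Nat.zero_le t))
      (fun u => exp (R * (u : ℝ)) * Snet N γ u t ω) ≤ exp b) :
    ∃ f ∈ monotoneChains N t, R * (f 0 : ℝ) + ∑ p ∈ chainCells f, log (1 + γ p.1 p.2 ω) ≤ b := by
  obtain ⟨u, hu, hle⟩ := (inf'_le_iff _).1 h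
  obtain ⟨f, hf, rfl, hSnet⟩ := exists_chain_eq_Snet hN γ ω (mem_Icc.1 hu).2
  refine ⟨f, hf, ?_⟩
  have hpos : ∀ k v, 0 < 1 + γ k v ω := fun k v => by linarith [hγ k v]
  rw [← exp_le_exp, exp_add, sum_chainCells, exp_sum]
  simpa only [exp_sum, exp_log (hpos _ _), ← hSnet] using hle

end ServiceProcess

section Chernoff

variable {Ω : Type*} {mΩ : MeasurableSpace Ω} {μ : Measure Ω}

theorem integrable_exp_mul_of_nonpos_of_ae_nonneg [IsFiniteMeasure μ] {X : Ω → ℝ}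
    (hX : AEMeasurable X μ) (hX0 : ∀ᵐ ω ∂μ, 0 ≤ X ω) {t : ℝ} (ht : t ≤ 0) :
    Integrable (fun ω => exp (t * X ω)) μ := by
  refine .of_bound (hX.const_mul t).exp.aestronglyMeasurable 1 ?_
  filter_upwards [hX0] with ω hω
  rw [norm_of_nonneg (exp_pos _).le, exp_le_one_iff]
  exact mul_nonpos_of_nonpos_of_nonneg ht hω

namespace ProbabilityTheory

theorem iIndepFun.measureReal_sum_le_le_exp_mul_prod_mgf {ι : Type*} {X : ι → Ω → ℝ}
    (hX : iIndepFun X μ) (hmeas : ∀ i, Measurable (X i)) {t : ℝ} (ht : t ≤ 0)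
    (hint : ∀ i, Integrable (fun ω => exp (t * X i ω)) μ) (S : Finset ι) (ε : ℝ) :
    μ.real {ω | ∑ i ∈ S, X i ω ≤ ε} ≤ exp (-t * ε) * ∏ i ∈ S, mgf (X i) μ t := by
  have := hX.isProbabilityMeasure
  have h := measure_le_le_exp_mul_mgf (X := ∑ i ∈ S, X i) ε ht
    (hX.integrable_exp_mul_sum hmeas fun i _ => hint i)
  rw [hX.mgf_sum hmeas] at h
  simpa only [Finset.sum_apply] using h

variable {N : ℕ} {X : Fin N × ℕ → Ω → ℝ} {θ M : ℝ}

theorem iIndepFun.measureReal_chain_le (hX : iIndepFun X μ) (hmeas : ∀ p, Measurable (X p))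
    (hθ : 0 ≤ θ) (hint : ∀ p, Integrable (fun ω => exp (-θ * X p ω)) μ)
    (hM : ∀ p, mgf (X p) μ (-θ) ≤ M) (R b : ℝ) {t : ℕ} {f : Fin (N + 1) → ℕ}
    (hf : f ∈ monotoneChains N t) :
    μ.real {ω | ∑ p ∈ chainCells f, X p ω ≤ b - R * (f 0 : ℝ)} ≤
      exp (θ * (b - R * t)) * (exp (θ * R) * M) ^ (t - f 0) := by
  obtain ⟨hmono, hlast⟩ := mem_monotoneChains.1 hf
  have hf0 : f 0 ≤ t := hlast ▸ hmono (Fin.zero_le _)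
  have hprod : ∏ p ∈ chainCells f, mgf (X p) μ (-θ) ≤ M ^ (t - f 0) := by
    rw [← hlast, ← card_chainCells hmono, ← prod_const]
    exact prod_le_prod (fun _ _ => mgf_nonneg) fun p _ => hM p
  calc μ.real {ω | ∑ p ∈ chainCells f, X p ω ≤ b - R * (f 0 : ℝ)}
      ≤ exp (θ * (b - R * (f 0 : ℝ))) * ∏ p ∈ chainCells f, mgf (X p) μ (-θ) := by
        simpa only [neg_neg] using
          hX.measureReal_sum_le_le_exp_mul_prod_mgf hmeas (neg_nonpos.2 hθ) hint _ _
    _ ≤ exp (θ * (b - R * (f 0 : ℝ))) * M ^ (t - f 0) :=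
        mul_le_mul_of_nonneg_left hprod (exp_pos _).le
    _ = exp (θ * (b - R * t)) * (exp (θ * R) * M) ^ (t - f 0) := by
        rw [mul_pow, ← exp_nat_mul, ← mul_assoc, ← exp_add, Nat.cast_sub hf0]
        ring_nf

theorem iIndepFun.measure_exists_chain_le (hX : iIndepFun X μ) (hmeas : ∀ p, Measurable (X p))
    (hθ : 0 ≤ θ) (hint : ∀ p, Integrable (fun ω => exp (-θ * X p ω)) μ)
    (hM : ∀ p, mgf (X p) μ (-θ) ≤ M) (hM0 : 0 ≤ M) (R b : ℝ) (t : ℕ)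
    (hV : exp (θ * R) * M < 1) :
    μ {ω | ∃ f ∈ monotoneChains N t, R * (f 0 : ℝ) + ∑ p ∈ chainCells f, X p ω ≤ b} ≤
      ENNReal.ofReal (exp (θ * (b - R * t)) / (1 - exp (θ * R) * M) ^ N) := by
  have := hX.isProbabilityMeasure
  set V := exp (θ * R) * M
  have hV0 : 0 ≤ V := mul_nonneg (exp_pos _).le hM0
  have hunion : {ω | ∃ f ∈ monotoneChains N t, R * (f 0 : ℝ) + ∑ p ∈ chainCells f, X p ω ≤ b} =
      ⋃ f ∈ monotoneChains N t, {ω | ∑ p ∈ chainCells f, X p ω ≤ b - R * (f 0 : ℝ)} := by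
    ext ω
    simp only [Set.mem_ofPred_eq, Set.mem_iUnion, exists_prop, le_sub_iff_add_le']
  calc μ {ω | ∃ f ∈ monotoneChains N t, R * (f 0 : ℝ) + ∑ p ∈ chainCells f, X p ω ≤ b}
      ≤ ∑ f ∈ monotoneChains N t, μ {ω | ∑ p ∈ chainCells f, X p ω ≤ b - R * (f 0 : ℝ)} :=
        hunion ▸ measure_biUnion_finset_le _ _
    _ ≤ ∑ f ∈ monotoneChains N t, ENNReal.ofReal (exp (θ * (b - R * t)) * V ^ (t - f 0)) :=
        sum_le_sum fun f hf => by
          rw [← ofReal_measureReal]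
          exact ENNReal.ofReal_le_ofReal (hX.measureReal_chain_le hmeas hθ hint hM R b hf)
    _ = ENNReal.ofReal (exp (θ * (b - R * t)) * ∑ f ∈ monotoneChains N t, V ^ (t - f 0)) := by
        rw [mul_sum, ENNReal.ofReal_sum_of_nonneg fun _ _ => by positivity]
    _ ≤ ENNReal.ofReal (exp (θ * (b - R * t)) / (1 - V) ^ N) := by
        rw [div_eq_mul_inv]
        exact ENNReal.ofReal_le_ofReal <| mul_le_mul_of_nonneg_left
          (sum_monotoneChains_pow_le hV0 hV t) (exp_pos _).le

end ProbabilityTheory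

end Chernoff

section ExponentialMoment

theorem measurable_exponentialPDF (r : ℝ) : Measurable (exponentialPDF r) :=
  (measurable_exponentialPDFReal r).ennreal_ofReal

theorem setIntegral_Ioi_comp_add_right {E : Type*} [NormedAddCommGroup E] [NormedSpace ℝ E]
    (g : ℝ → E) (a c : ℝ) : ∫ x in Set.Ioi a, g (x + c) = ∫ x in Set.Ioi (a + c), g x := by
  rw [← Set.image_add_const_Ioi,
    (measurePreserving_add_right volume c).setIntegral_image_emb (measurableEmbedding_addRight c)]

theorem mul_integral_one_add_rpow_mul_exp {r : ℝ} (hr : 0 < r) (a : ℝ) :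
    r * ∫ x in Set.Ioi 0, (1 + x) ^ a * exp (-(r * x)) =
      exp r * r ^ (-a) * ∫ y in Set.Ioi r, y ^ a * exp (-y) := by
  have hscale : ∀ x ∈ Set.Ioi (0 : ℝ), (1 + x) ^ a * exp (-(r * x)) =
      exp r * r ^ (-a) * ((r * (x + 1)) ^ a * exp (-(r * (x + 1)))) := by
    intro x hx
    have hra : 0 < r ^ a := rpow_pos_of_pos hr a
    rw [mul_rpow hr.le (by linarith [hx.out]), rpow_neg hr.le, add_comm x 1,
      show -(r * (1 + x)) = -(r * x) + -r by ring, exp_add, exp_neg r]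
    field_simp
  rw [setIntegral_congr_fun measurableSet_Ioi hscale, integral_const_mul,
    setIntegral_Ioi_comp_add_right (fun x => (r * x) ^ a * exp (-(r * x))), zero_add,
    integral_comp_mul_left_Ioi (fun y => y ^ a * exp (-y)) 1 hr, mul_one, smul_eq_mul]
  field_simp

theorem integral_withDensity_exponentialPDF {r : ℝ} (hr : 0 < r) (φ : ℝ → ℝ) :
    ∫ x, φ x ∂volume.withDensity (exponentialPDF r) =
      ∫ x in Set.Ioi 0, r * exp (-(r * x)) * φ x := by
  have hdens : ∀ x, (exponentialPDF r x).toReal =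
      Set.indicator (Set.Ici 0) (fun x => r * exp (-(r * x))) x := by
    intro x
    rw [exponentialPDF_eq, ENNReal.toReal_ofReal (by split_ifs <;> positivity)]
    rfl
  rw [integral_withDensity_eq_integral_toReal_smul (measurable_exponentialPDF r)
    (.of_forall fun _ => ENNReal.ofReal_lt_top)]
  simp only [hdens, smul_eq_mul, ← Set.indicator_mul_left]
  rw [integral_indicator measurableSet_Ici, integral_Ici_eq_integral_Ioi]

variable {Ω : Type*} {mΩ : MeasurableSpace Ω} {μ : Measure Ω} {g : Ω → ℝ} {r : ℝ}

theorem ae_nonneg_of_map_eq_withDensity_exponentialPDF (hg : AEMeasurable g μ)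
    (hlaw : μ.map g = volume.withDensity (exponentialPDF r)) : ∀ᵐ ω ∂μ, 0 ≤ g ω := by
  refine ae_of_ae_map hg ?_
  rw [hlaw, ae_withDensity_iff (measurable_exponentialPDF r)]
  exact .of_forall fun x hx => not_lt.1 fun hneg => hx (exponentialPDF_of_neg hneg)

theorem mgf_log_one_add_of_map_eq_withDensity_exponentialPDF (hg : AEMeasurable g μ) (hr : 0 < r)
    (hlaw : μ.map g = volume.withDensity (exponentialPDF r)) (a : ℝ) :
    mgf (fun ω => log (1 + g ω)) μ a = exp r * r ^ (-a) * ∫ y in Set.Ioi r, y ^ a * exp (-y) := by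
  have hmeas : Measurable fun x : ℝ => exp (a * log (1 + x)) := by fun_prop
  rw [← mul_integral_one_add_rpow_mul_exp hr, ← integral_const_mul, mgf,
    ← integral_map hg hmeas.aestronglyMeasurable, hlaw, integral_withDensity_exponentialPDF hr]
  refine setIntegral_congr_fun measurableSet_Ioi fun x hx => ?_
  rw [rpow_def_of_pos (by linarith [hx.out]), mul_comm a]
  ring

end ExponentialMoment

theorem rayleigh_multihop_frame_departure_bound_general
    {Ω : Type*} [MeasureSpace Ω] [IsProbabilityMeasure (ℙ : Measure Ω)]
    (N : ℕ) (hN : 1 ≤ N) (R γbar : ℝ) (hγbar : 0 < γbar)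
    (γ : Fin N → ℕ → Ω → ℝ)
    (hmeas : ∀ k u, Measurable (γ k u))
    (hindep : iIndepFun
      (fun p : Fin N × ℕ => γ p.1 p.2) ℙ)
    (hdist : ∀ k u, Measure.map (γ k u) ℙ = volume.withDensity (exponentialPDF γbar⁻¹))
    (D : ℕ → Ω → ℝ)
    (hD : ∀ t : ℕ, ∀ᵐ ω ∂ℙ,
      (Finset.Icc 0 t).inf' (Finset.nonempty_Icc.mpr (Nat.zero_le t))
        (fun u => Real.exp (R * (u : ℝ)) * Snet N γ u t ω) ≤ Real.exp (D t ω))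
    (V : ℝ → ℝ)
    (hV : ∀ s : ℝ, V s = Real.exp ((1 - s) * R) * Real.exp γbar⁻¹ * γbar ^ (s - 1) *
      ∫ x in Set.Ioi γbar⁻¹, x ^ (s - 1) * Real.exp (-x))
    (τ TD : ℕ) (d : ℝ)
    (s : ℝ) (hs : s < 1) (hstab : V s < 1) :
    ℙ {ω | (D (τ + TD) ω - D τ ω) - (R * (τ : ℝ) - D τ ω) ≤ d} ≤
      ENNReal.ofReal
        (Real.exp ((s - 1) * (R * (TD : ℝ) - d)) / (1 - V s) ^ N) := by
  set X : Fin N × ℕ → Ω → ℝ := fun p ω => log (1 + γ p.1 p.2 ω)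
  set M := exp γbar⁻¹ * γbar ^ (s - 1) * ∫ x in Set.Ioi γbar⁻¹, x ^ (s - 1) * exp (-x)
  have hVs : V s = exp ((1 - s) * R) * M := by rw [hV]; ring
  have hγ0 : ∀ k v, ∀ᵐ ω ∂ℙ, 0 ≤ γ k v ω := fun k v =>
    ae_nonneg_of_map_eq_withDensity_exponentialPDF (hmeas k v).aemeasurable (hdist k v)
  have hXmeas : ∀ p, Measurable (X p) := fun p => ((hmeas p.1 p.2).const_add 1).log
  have hX : iIndepFun X ℙ := hindep.comp (fun _ x => log (1 + x)) fun _ => by fun_prop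
  have hint : ∀ p, Integrable (fun ω => exp (-(1 - s) * X p ω)) ℙ := fun p =>
    integrable_exp_mul_of_nonpos_of_ae_nonneg (hXmeas p).aemeasurable
      (by filter_upwards [hγ0 p.1 p.2] with ω hω using log_nonneg (by linarith)) (by linarith)
  have hM : ∀ p, mgf (X p) ℙ (-(1 - s)) = M := fun p => by
    rw [mgf_log_one_add_of_map_eq_withDensity_exponentialPDF (hmeas p.1 p.2).aemeasurable
      (inv_pos.2 hγbar) (hdist p.1 p.2), neg_neg, inv_rpow hγbar.le, ← rpow_neg hγbar.le, neg_sub]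
  have hchain : ∀ᵐ ω ∂ℙ, D (τ + TD) ω - D τ ω - (R * τ - D τ ω) ≤ d →
      ∃ f ∈ monotoneChains N (τ + TD), R * (f 0 : ℝ) + ∑ p ∈ chainCells f, X p ω ≤ R * τ + d := by
    filter_upwards [ae_all_iff.2 fun k => ae_all_iff.2 (hγ0 k), hD (τ + TD)] with ω hω hDω hle
    exact exists_chain_of_inf'_le_exp hN hω (hDω.trans (exp_le_exp.2 (by linarith)))
  calc _ ≤ _ := measure_mono_ae hchain
    _ ≤ _ := hX.measure_exists_chain_le hXmeas (by linarith) hint (fun p => (hM p).le)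
        (hM ⟨⟨0, hN⟩, 0⟩ ▸ mgf_nonneg) R (R * τ + d) (τ + TD) (hVs ▸ hstab)
    _ = _ := by
      rw [hVs]
      congr 3
      push_cast
      ring

/-- Probabilistic lower bound on the per-frame departures within the playout deadline over
an `N`-hop path of i.i.d. Rayleigh channels: with backlog `B(τ) = Rτ − D(0,τ)` and
departures `D(τ,t) = D(0,t) − D(0,τ)`, for `s < 1` with `V(1−s) < 1`,
`P(D(τ,τ+T_D) − B(τ) ≤ d) ≤ e^{(s−1)(R·T_D − d)}/(1 − V(1−s))^N`. -/
theorem rayleigh_multihop_frame_departure_bound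
    {Ω : Type*} [MeasureSpace Ω] [IsProbabilityMeasure (ℙ : Measure Ω)]
    (N : ℕ) (hN : 1 ≤ N) (R γbar : ℝ) (hR : 0 < R) (hγbar : 0 < γbar)
    (γ : Fin N → ℕ → Ω → ℝ)
    (hmeas : ∀ k u, Measurable (γ k u))
    (hindep : iIndepFun
      (fun p : Fin N × ℕ => γ p.1 p.2) ℙ)
    (hdist : ∀ k u, Measure.map (γ k u) ℙ = volume.withDensity (exponentialPDF γbar⁻¹))
    (D : ℕ → Ω → ℝ) (hDmeas : ∀ t, Measurable (D t)) (hD0 : ∀ ω, D 0 ω = 0)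
    (hD : ∀ t : ℕ, ∀ᵐ ω ∂ℙ,
      (Finset.Icc 0 t).inf' (Finset.nonempty_Icc.mpr (Nat.zero_le t))
        (fun u => Real.exp (R * (u : ℝ)) * Snet N γ u t ω) ≤ Real.exp (D t ω))
    (V : ℝ → ℝ)
    (hV : ∀ s : ℝ, V s = Real.exp ((1 - s) * R) * Real.exp γbar⁻¹ * γbar ^ (s - 1) *
      ∫ x in Set.Ioi γbar⁻¹, x ^ (s - 1) * Real.exp (-x))
    (τ TD : ℕ) (d : ℝ) (hd : 0 ≤ d)
    (s : ℝ) (hs : s < 1) (hstab : V s < 1) :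
    ℙ {ω | (D (τ + TD) ω - D τ ω) - (R * (τ : ℝ) - D τ ω) ≤ d} ≤
      ENNReal.ofReal
        (Real.exp ((s - 1) * (R * (TD : ℝ) - d)) / (1 - V s) ^ N) :=
  rayleigh_multihop_frame_departure_bound_general N hN R γbar hγbar γ hmeas hindep hdist D hD V hV τ
    TD d s hs hstab
end

section
/- Let N ≥ 1, R > 0, γ̄ > 0, and let (γ_{k,u})_{1≤k≤N, u∈ℕ} be mutually independent exponential random variables with mean γ̄. Define 𝒮_k(τ,t) = Π_{u=τ}^{t−1}(1+γ_{k,u}) and 𝒮_net(τ,t) = min over chains τ = u₀ ≤ u₁ ≤ ⋯ ≤ u_N = t of Π_{k=1}^{N} 𝒮_k(u_{k−1},u_k). Let (D(0,t))_{t∈ℕ} be real-valued random variables with D(0,0) = 0 satisfying almost surely e^{D(0,t)} ≥ min_{0≤u≤t} e^{R·u} · 𝒮_net(u,t) for every t, and set B(τ) = R·τ − D(0,τ) and D(τ,t) = D(0,t) − D(0,τ). Let V(1−s) = e^{(1−s)R} e^{1/γ̄} γ̄^{\,s−1} Γ(s,1/γ̄), with Γ(s,a) = ∫_a^∞ x^{s−1}e^{−x}dx.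 Fix ε ∈ (0,1], T_D ∈ ℕ, and a real s < 1 with V(1−s) < 1, and define d = R·T_D + (1/(1−s)) · ( N·log(1 − V(1−s)) + log ε ). If d ≥ 0, then for every natural number τ: P( D(τ, τ+T_D) − B(τ) ≤ d ) ≤ ε. -/
open MeasureTheory ProbabilityTheory

open Set Real


lemma my_integral_comp_add_right_Ioi (g : ℝ → ℝ) (a c : ℝ) :
    ∫ x in Ioi a, g (x + c) = ∫ x in Ioi (a + c), g x := by
  rw [← integral_indicator measurableSet_Ioi, ← integral_indicator measurableSet_Ioi]
  rw [show (Ioi a).indicator (fun x => g (x + c)) =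
      (fun x => (Ioi (a + c)).indicator g (x + c)) by
    ext x
    simp only [Set.indicator_apply, mem_Ioi]
    congr 1
    · simp
    ]
  exact integral_add_right_eq_self (Set.indicator (Ioi (a+c)) g) c

lemma my_telescope : ∀ (n : ℕ) (c : Fin (n+1) → ℕ), Monotone c →
    ∑ k : Fin n, (c k.succ - c k.castSucc) = c (Fin.last n) - c 0
  | 0, c, _ => by simp
  | (n+1), c, hc => by
    rw [Fin.sum_univ_castSucc]
    have ih := my_telescope n (fun j => c j.castSucc)
      (fun i j hij => hc (by simpa using hij))
    simp only [Fin.succ_castSucc] at *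
    rw [ih]
    have h2 : c 0 ≤ c (Fin.last n).castSucc := hc (Fin.zero_le _)
    have h3 : c (Fin.last n).castSucc ≤ c (Fin.last n).succ :=
      hc (Fin.castSucc_le_succ _)
    have h4 : (Fin.last n).succ = Fin.last (n+1) := Fin.succ_last n
    rw [← h4]
    have e0 : ((0 : Fin (n+1)).castSucc) = (0 : Fin (n+2)) := rfl
    rw [e0] at *
    omega

lemma my_tsum_pow : ∀ (n : ℕ) (w : ENNReal),
    ∑' v : Fin n → ℕ, w ^ (∑ k, v k) = ((1 - w)⁻¹) ^ n
  | 0, w => by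
    rw [tsum_eq_single (fun _ => 0) (by intro v hv; exact absurd (Subsingleton.elim v _) hv)]
    simp
  | (n+1), w => by
    rw [← (Fin.consEquiv (fun _ : Fin (n+1) => ℕ)).tsum_eq (fun v => w ^ (∑ k, v k))]
    have : ∀ p : ℕ × (Fin n → ℕ),
        w ^ (∑ k, (Fin.consEquiv (fun _ : Fin (n+1) => ℕ) p) k) = w ^ p.1 * w ^ (∑ k, p.2 k) := by
      intro p
      rw [← pow_add]
      congr 1
      rw [Fin.sum_univ_succ]
      congr 1
    rw [tsum_congr this, ENNReal.tsum_prod']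
    simp_rw [ENNReal.tsum_mul_left, ENNReal.tsum_mul_right]
    rw [my_tsum_pow n w, ENNReal.tsum_geometric]
    ring

lemma my_chain_inj (n t : ℕ) :
    Function.Injective (fun c : {c : Fin (n+1) → ℕ // Monotone c ∧ c (Fin.last n) = t} =>
      (fun k : Fin n => c.1 k.succ - c.1 k.castSucc)) := by
  rintro ⟨c, hc, hct⟩ ⟨c', hc', hct'⟩ h
  simp only [Subtype.mk.injEq] at *
  ext j
  induction j using Fin.reverseInduction with
  | last => rw [hct, hct']
  | cast i ih =>
      have h1 : c i.castSucc + (c i.succ - c i.castSucc) = c i.succ :=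
        Nat.add_sub_cancel' (hc (Fin.castSucc_le_succ i))
      have h2 : c' i.castSucc + (c' i.succ - c' i.castSucc) = c' i.succ :=
        Nat.add_sub_cancel' (hc' (Fin.castSucc_le_succ i))
      have h3 : c i.succ - c i.castSucc = c' i.succ - c' i.castSucc := congrFun h i
      omega

lemma my_lintegral_prod {Ω : Type*} [MeasureSpace Ω] [IsProbabilityMeasure (ℙ : Measure Ω)]
    {ι : Type*} (X : ι → Ω → ENNReal)
    (hX : iIndepFun X ℙ)
    (hXm : ∀ i, Measurable (X i)) (T : Finset ι) :
    ∫⁻ ω, ∏ i ∈ T, X i ω ∂ℙ = ∏ i ∈ T, ∫⁻ ω, X i ω ∂ℙ := by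
  classical
  induction T using Finset.induction_on with
  | empty => simp
  | @insert a T hi ih =>
      rw [Finset.prod_insert hi]
      simp_rw [Finset.prod_insert hi]
      rw [← ih]
      have hindep : IndepFun (∏ j ∈ T, X j) (X a) ℙ :=
        hX.indepFun_finsetProd_of_notMem hXm hi
      have hindep' : IndepFun (fun ω => ∏ i ∈ T, X i ω) (X a) ℙ := by
        have : (fun ω => ∏ i ∈ T, X i ω) = ∏ j ∈ T, X j := by
          ext ω; simp
        rw [this]; exact hindep
      have := lintegral_mul_eq_lintegral_mul_lintegral_of_indepFun
        (Finset.measurable_prod T (fun i _ => hXm i)) (hXm a) hindep'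
      calc ∫⁻ ω, X a ω * ∏ i ∈ T, X i ω ∂ℙ
          = ∫⁻ ω, (∏ i ∈ T, X i ω) * X a ω ∂ℙ := by
            apply lintegral_congr; intro ω; rw [mul_comm]
        _ = (∫⁻ ω, ∏ i ∈ T, X i ω ∂ℙ) * ∫⁻ ω, X a ω ∂ℙ := this
        _ = (∫⁻ ω, X a ω ∂ℙ) * ∫⁻ ω, ∏ i ∈ T, X i ω ∂ℙ := by
            rw [mul_comm]

lemma my_moment (r s : ℝ) (hr : 0 < r) (hs : s < 1) :
    ∫⁻ x, ENNReal.ofReal ((1+x) ^ (s-1)) ∂(volume.withDensity (exponentialPDF r))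
      = ENNReal.ofReal (Real.exp r * r ^ (1-s) * ∫ x in Ioi r, x ^ (s-1) * Real.exp (-x)) := by
  have hb : Measurable fun y : ℝ => y ^ (s-1) := by measurability
  have hb1 : Measurable fun x : ℝ => (1+x) ^ (s-1) :=
    hb.comp (measurable_const.add measurable_id)
  have hφ : Measurable fun x : ℝ => ENNReal.ofReal ((1+x) ^ (s-1)) :=
    hb1.ennreal_ofReal
  have hpdfm : Measurable (exponentialPDF r) :=
    (measurable_exponentialPDFReal r).ennreal_ofReal
  rw [lintegral_withDensity_eq_lintegral_mul volume hpdfm hφ]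
  set g : ℝ → ℝ := fun x => if 0 ≤ x then (1+x) ^ (s-1) * (r * Real.exp (-(r*x))) else 0
    with hg
  have hgnon : ∀ x, 0 ≤ g x := by
    intro x
    by_cases hx : 0 ≤ x <;> simp only [hg, hx, if_true, if_false, le_refl]
    · positivity
  have hpt : ∀ x, (exponentialPDF r * fun x => ENNReal.ofReal ((1+x) ^ (s-1))) x
      = ENNReal.ofReal (g x) := by
    intro x
    by_cases hx : 0 ≤ x
    · simp only [Pi.mul_apply, exponentialPDF_of_nonneg hx, hg, hx, if_true]
      rw [← ENNReal.ofReal_mul (by positivity)]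
      ring_nf
    · simp only [Pi.mul_apply, exponentialPDF_of_neg (lt_of_not_ge hx), hg, hx, if_false,
        ENNReal.ofReal_zero, zero_mul]
  rw [lintegral_congr hpt]
  have hgeq : g = (Ici (0:ℝ)).indicator (fun x => (1+x) ^ (s-1) * (r * Real.exp (-(r*x)))) := by
    ext x; simp [hg, Set.indicator_apply, mem_Ici]
  have hmeas_h : Measurable fun x : ℝ => (1+x) ^ (s-1) * (r * Real.exp (-(r*x))) :=
    hb1.mul (((measurable_const.mul measurable_id).neg.exp).const_mul r)
  have hbound : IntegrableOn (fun x => r * Real.exp (-r * x)) (Ioi (0:ℝ)) volume :=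
    (exp_neg_integrableOn_Ioi 0 hr).const_mul r
  have hInt : Integrable g volume := by
    rw [hgeq, integrable_indicator_iff measurableSet_Ici]
    rw [IntegrableOn, Measure.restrict_congr_set Ioi_ae_eq_Ici.symm]
    apply Integrable.mono' hbound (hmeas_h.aestronglyMeasurable.restrict)
    · filter_upwards [ae_restrict_mem measurableSet_Ioi] with x hx
      rw [mem_Ioi] at hx
      have hx1 : (0:ℝ) ≤ 1 + x := by linarith
      rw [Real.norm_eq_abs, abs_of_nonneg (mul_nonneg (rpow_nonneg hx1 _) (by positivity))]
      have h1 : (1+x) ^ (s-1) ≤ 1 :=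
        rpow_le_one_of_one_le_of_nonpos (by linarith) (by linarith)
      have h2 : (0:ℝ) ≤ r * Real.exp (-(r*x)) := by positivity
      calc (1+x) ^ (s-1) * (r * Real.exp (-(r*x))) ≤ 1 * (r * Real.exp (-(r*x))) :=
            mul_le_mul_of_nonneg_right h1 h2
        _ = r * Real.exp (-r * x) := by rw [one_mul, neg_mul]
  rw [← ofReal_integral_eq_lintegral_ofReal hInt (Filter.Eventually.of_forall hgnon)]
  congr 1
  rw [hgeq, integral_indicator measurableSet_Ici, integral_Ici_eq_integral_Ioi]
  have key : ∀ x ∈ Ioi (0:ℝ), (1+x) ^ (s-1) * (r * Real.exp (-(r*x)))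
      = (r * Real.exp r * r ^ (1-s)) * ((r * (x+1)) ^ (s-1) * Real.exp (-(r * (x+1)))) := by
    intro x hx
    rw [mem_Ioi] at hx
    have e1 : (r*(x+1)) ^ (s-1) = r ^ (s-1) * (x+1) ^ (s-1) :=
      Real.mul_rpow hr.le (by linarith)
    have e2 : Real.exp (-(r*(x+1))) = Real.exp (-(r*x)) * Real.exp (-r) := by
      rw [← Real.exp_add]; ring_nf
    have e3 : r ^ (1-s) * r ^ (s-1) = 1 := by
      rw [← Real.rpow_add hr]; norm_num
    have e4 : Real.exp r * Real.exp (-r) = 1 := by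
      rw [← Real.exp_add]; simp
    rw [e1, e2]
    have e5 : (x+1) = (1+x) := by ring
    rw [e5]
    have : r * Real.exp r * r ^ (1-s) * (r ^ (s-1) * (1+x) ^ (s-1) * (Real.exp (-(r*x)) * Real.exp (-r)))
        = (r ^ (1-s) * r ^ (s-1)) * (Real.exp r * Real.exp (-r)) * (r * (1+x) ^ (s-1) * Real.exp (-(r*x))) := by
      ring
    rw [this, e3, e4]
    ring
  rw [setIntegral_congr_fun measurableSet_Ioi key]
  rw [integral_const_mul]
  have step1 : ∫ x in Ioi (0:ℝ), (r * (x+1)) ^ (s-1) * Real.exp (-(r * (x+1)))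
      = ∫ x in Ioi (1:ℝ), (r * x) ^ (s-1) * Real.exp (-(r * x)) := by
    have := my_integral_comp_add_right_Ioi
      (fun y => (r * y) ^ (s-1) * Real.exp (-(r * y))) 0 1
    simpa using this
  have step2 : ∫ x in Ioi (1:ℝ), (r * x) ^ (s-1) * Real.exp (-(r * x))
      = r⁻¹ * ∫ x in Ioi r, x ^ (s-1) * Real.exp (-x) := by
    have := integral_comp_mul_left_Ioi (fun y => y ^ (s-1) * Real.exp (-y)) 1 hr
    simp only [mul_one, smul_eq_mul] at this
    exact this
  rw [step1, step2]
  field_simp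

/-- Reliability of the network-calculus per-frame departure bound: with
`d = R·T_D + (1/(1−s))(N·log(1−V(1−s)) + log ε)` (assumed nonnegative), obtained by
equating the tail bound to the target `ε`, the per-frame departures within the deadline
satisfy `P(D(τ,τ+T_D) − B(τ) ≤ d) ≤ ε` for every frame generation slot `τ`. -/
theorem rayleigh_multihop_frame_departure_reliability
    {Ω : Type*} [MeasureSpace Ω] [IsProbabilityMeasure (ℙ : Measure Ω)]
    (N : ℕ) (hN : 1 ≤ N) (R γbar : ℝ) (hR : 0 < R) (hγbar : 0 < γbar)
    (γ : Fin N → ℕ → Ω → ℝ)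
    (hmeas : ∀ k u, Measurable (γ k u))
    (hindep : iIndepFun
      (fun p : Fin N × ℕ => γ p.1 p.2) ℙ)
    (hdist : ∀ k u, Measure.map (γ k u) ℙ = volume.withDensity (exponentialPDF γbar⁻¹))
    (D : ℕ → Ω → ℝ) (hDmeas : ∀ t, Measurable (D t)) (hD0 : ∀ ω, D 0 ω = 0)
    (hD : ∀ t : ℕ, ∀ᵐ ω ∂ℙ,
      (Finset.Icc 0 t).inf' (Finset.nonempty_Icc.mpr (Nat.zero_le t))
        (fun u => Real.exp (R * (u : ℝ)) * Snet N γ u t ω) ≤ Real.exp (D t ω))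
    (V : ℝ → ℝ)
    (hV : ∀ s : ℝ, V s = Real.exp ((1 - s) * R) * Real.exp γbar⁻¹ * γbar ^ (s - 1) *
      ∫ x in Set.Ioi γbar⁻¹, x ^ (s - 1) * Real.exp (-x))
    (ε : ℝ) (hε : ε ∈ Set.Ioc (0 : ℝ) 1) (TD : ℕ)
    (s : ℝ) (hs : s < 1) (hstab : V s < 1)
    (d : ℝ)
    (hdef : d = R * (TD : ℝ) + (1 / (1 - s)) * ((N : ℝ) * Real.log (1 - V s) + Real.log ε))
    (hd : 0 ≤ d) (τ : ℕ) :
    ℙ {ω | (D (τ + TD) ω - D τ ω) - (R * (τ : ℝ) - D τ ω) ≤ d} ≤ ENNReal.ofReal ε := by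
  
  classical
  have hs1 : (0:ℝ) < 1 - s := by linarith
  set t := τ + TD with ht
  set I : ℝ := ∫ x in Set.Ioi γbar⁻¹, x ^ (s-1) * Real.exp (-x) with hI
  have hr : (0:ℝ) < γbar⁻¹ := inv_pos.mpr hγbar
  have hInonneg : 0 ≤ I := by
    apply setIntegral_nonneg measurableSet_Ioi
    intro x hx
    exact mul_nonneg (Real.rpow_nonneg (le_of_lt (lt_trans hr hx)) _) (Real.exp_pos _).le
  set M : ℝ := Real.exp γbar⁻¹ * γbar ^ (s-1) * I with hM
  have hM0 : 0 ≤ M :=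
    mul_nonneg (mul_nonneg (Real.exp_pos _).le (Real.rpow_nonneg hγbar.le _)) hInonneg
  have hVM : V s = Real.exp ((1-s)*R) * M := by rw [hV s, hM]; ring
  have hV0 : 0 ≤ V s := by rw [hVM]; exact mul_nonneg (Real.exp_pos _).le hM0
  have h1V : (0:ℝ) < 1 - V s := by linarith
  -- measurable map
  have hb : Measurable fun y : ℝ => y ^ (s-1) := by measurability
  have hφ : Measurable fun x : ℝ => ENNReal.ofReal ((1+x) ^ (s-1)) :=
    (hb.comp (measurable_const.add measurable_id)).ennreal_ofReal
  -- the composed family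
  set X : Fin N × ℕ → Ω → ENNReal :=
    fun p => (fun x : ℝ => ENNReal.ofReal ((1+x) ^ (s-1))) ∘ (γ p.1 p.2) with hX
  have hXm : ∀ p, Measurable (X p) := fun p => hφ.comp (hmeas p.1 p.2)
  have hXindep : iIndepFun X ℙ :=
    hindep.comp (fun _ x => ENNReal.ofReal ((1+x) ^ (s-1))) (fun _ => hφ)
  -- per-slot moment
  have hmom : ∀ p : Fin N × ℕ, ∫⁻ ω, X p ω ∂ℙ = ENNReal.ofReal M := by
    intro p
    have h1 : ∫⁻ ω, X p ω ∂ℙ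
        = ∫⁻ x, ENNReal.ofReal ((1+x) ^ (s-1)) ∂(Measure.map (γ p.1 p.2) ℙ) :=
      (lintegral_map hφ (hmeas p.1 p.2)).symm
    rw [h1, hdist p.1 p.2, my_moment γbar⁻¹ s hr hs]
    congr 1
    rw [hM, hI]
    congr 2
    rw [Real.inv_rpow hγbar.le, ← Real.rpow_neg hγbar.le]
    norm_num
  -- ae nonnegativity
  have hG1 : ∀ᵐ ω ∂ℙ, ∀ p : Fin N × ℕ, 0 ≤ γ p.1 p.2 ω := by
    rw [ae_all_iff]
    intro p
    rw [ae_iff]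
    have hset : {ω | ¬ 0 ≤ γ p.1 p.2 ω} = γ p.1 p.2 ⁻¹' (Set.Iio 0) := by
      ext ω; simp [not_le]
    rw [hset, ← Measure.map_apply (hmeas p.1 p.2) measurableSet_Iio, hdist p.1 p.2,
      withDensity_apply _ measurableSet_Iio, lintegral_exponentialPDF_of_nonpos le_rfl]
  -- rewrite the event
  have hEeq : {ω | (D (τ + TD) ω - D τ ω) - (R * (τ:ℝ) - D τ ω) ≤ d}
      = {ω | D t ω ≤ R * τ + d} := by
    ext ω; simp only [Set.mem_setOf_eq]
    constructor <;> intro h <;> linarith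
  -- chain events
  set A : {c : Fin (N+1) → ℕ // Monotone c ∧ c (Fin.last N) = t} → Set Ω :=
    fun c => {ω | ∏ k : Fin N, ∏ v ∈ Finset.Ico (c.1 k.castSucc) (c.1 k.succ),
      (1 + γ k v ω) ≤ Real.exp (R * τ + d - R * (c.1 0 : ℝ))} with hA
  -- inclusion
  have hincl : ∀ᵐ ω ∂ℙ, ω ∈ {ω | D t ω ≤ R * τ + d} → ω ∈ ⋃ c, A c := by
    filter_upwards [hD t] with ω hω hE
    obtain ⟨u, humem, hueq⟩ := Finset.exists_mem_eq_inf'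
      (Finset.nonempty_Icc.mpr (Nat.zero_le t))
      (fun u => Real.exp (R * (u:ℝ)) * Snet N γ u t ω)
    have hut : u ≤ t := (Finset.mem_Icc.mp humem).2
    have hle : Real.exp (R * (u:ℝ)) * Snet N γ u t ω ≤ Real.exp (R * τ + d) := by
      rw [← hueq]
      exact le_trans hω (Real.exp_le_exp.mpr hE)
    have hSle : Snet N γ u t ω ≤ Real.exp (R * τ + d - R * (u:ℝ)) := by
      rw [Real.exp_sub, le_div_iff₀ (Real.exp_pos _), mul_comm]
      exact hle
    -- the set of chain values is finite and nonempty
    set Sset : Set (Fin (N+1) → ℕ) :=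
      {c | Monotone c ∧ c 0 = u ∧ c (Fin.last N) = t} with hSset
    have hSfin : Sset.Finite := by
      apply Set.Finite.subset (Set.Finite.pi (fun _ : Fin (N+1) => Set.finite_Icc u t))
      rintro c ⟨h1, h2, h3⟩
      rw [Set.mem_univ_pi]
      intro j
      exact ⟨h2 ▸ h1 (Fin.zero_le j), h3 ▸ h1 (Fin.le_last j)⟩
    have hYeq : {y : ℝ | ∃ c : Fin (N+1) → ℕ, Monotone c ∧ c 0 = u ∧ c (Fin.last N) = t ∧
        y = ∏ k : Fin N, ∏ v ∈ Finset.Ico (c k.castSucc) (c k.succ), (1 + γ k v ω)}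
        = (fun c : Fin (N+1) → ℕ =>
            ∏ k : Fin N, ∏ v ∈ Finset.Ico (c k.castSucc) (c k.succ), (1 + γ k v ω)) '' Sset := by
      ext y
      constructor
      · rintro ⟨c, h1, h2, h3, h4⟩; exact ⟨c, ⟨h1, h2, h3⟩, h4.symm⟩
      · rintro ⟨c, ⟨h1, h2, h3⟩, h4⟩; exact ⟨c, h1, h2, h3, h4.symm⟩
    have hYne : {y : ℝ | ∃ c : Fin (N+1) → ℕ, Monotone c ∧ c 0 = u ∧ c (Fin.last N) = t ∧
        y = ∏ k : Fin N, ∏ v ∈ Finset.Ico (c k.castSucc) (c k.succ), (1 + γ k v ω)}.Nonempty := by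
      refine ⟨_, ⟨fun j => if (j:ℕ) = N then t else u, ?_, ?_, ?_, rfl⟩⟩
      · intro i j hij
        dsimp only
        by_cases hj : (j:ℕ) = N
        · rw [if_pos hj]
          split
          · exact le_refl t
          · exact hut
        · have hj' : (j:ℕ) ≤ N := Nat.lt_succ_iff.mp j.isLt
          have hij' : (i:ℕ) ≤ (j:ℕ) := hij
          have hi : (i:ℕ) ≠ N := by omega
          rw [if_neg hj, if_neg hi]
      · simp only [Fin.val_zero]
        exact if_neg (by omega : ¬ ((0:ℕ) = N))
      · simp
    have hSnet_mem : Snet N γ u t ω ∈ {y : ℝ | ∃ c : Fin (N+1) → ℕ, Monotone c ∧ c 0 = u ∧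
        c (Fin.last N) = t ∧
        y = ∏ k : Fin N, ∏ v ∈ Finset.Ico (c k.castSucc) (c k.succ), (1 + γ k v ω)} :=
      Set.Nonempty.csInf_mem hYne (hYeq ▸ (hSfin.image _))
    obtain ⟨c, hc1, hc2, hc3, hc4⟩ := hSnet_mem
    refine Set.mem_iUnion.mpr ⟨⟨c, hc1, hc3⟩, ?_⟩
    show ∏ k : Fin N, ∏ v ∈ Finset.Ico (c k.castSucc) (c k.succ), (1 + γ k v ω)
      ≤ Real.exp (R * τ + d - R * (c 0 : ℝ))
    rw [hc2, ← hc4]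
    exact hSle
  -- per-chain bound
  have hbound : ∀ c : {c : Fin (N+1) → ℕ // Monotone c ∧ c (Fin.last N) = t},
      ℙ (A c) ≤ ENNReal.ofReal (Real.exp ((R * τ + d - R * (t:ℝ)) * (1-s)))
        * (ENNReal.ofReal (V s)) ^ (t - c.1 0) := by
    intro c
    have hut : c.1 0 ≤ t := by
      have := c.2.1 (Fin.zero_le (Fin.last N))
      rwa [c.2.2] at this
    set Tc : Finset (Fin N × ℕ) := Finset.univ.biUnion
      (fun k : Fin N => (Finset.Ico (c.1 k.castSucc) (c.1 k.succ)).image (fun v => (k, v)))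
      with hTc
    have hdisj : ∀ k ∈ (Finset.univ : Finset (Fin N)), ∀ k' ∈ (Finset.univ : Finset (Fin N)),
        k ≠ k' → Disjoint ((Finset.Ico (c.1 k.castSucc) (c.1 k.succ)).image (fun v => (k, v)))
          ((Finset.Ico (c.1 k'.castSucc) (c.1 k'.succ)).image (fun v => (k', v))) := by
      intro k _ k' _ hkk'
      rw [Finset.disjoint_left]
      rintro p hp hp'
      simp only [Finset.mem_image] at hp hp'
      obtain ⟨v, _, rfl⟩ := hp
      obtain ⟨v', _, h⟩ := hp'
      exact hkk' (congrArg Prod.fst h).symm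
    have hTprod : ∀ {β : Type} [CommMonoid β] (g : Fin N × ℕ → β),
        ∏ p ∈ Tc, g p = ∏ k : Fin N,
          ∏ v ∈ Finset.Ico (c.1 k.castSucc) (c.1 k.succ), g (k, v) := by
      intro β _ g
      rw [hTc, Finset.prod_biUnion hdisj]
      exact Finset.prod_congr rfl (fun k _ =>
        Finset.prod_image (fun x _ y _ h => (Prod.mk.injEq _ _ _ _ ▸ h).2))
    have hcard : Tc.card = t - c.1 0 := by
      rw [hTc, Finset.card_biUnion hdisj]
      have h1 : ∀ k : Fin N,
          ((Finset.Ico (c.1 k.castSucc) (c.1 k.succ)).image (fun v => (k, v))).card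
            = c.1 k.succ - c.1 k.castSucc := by
        intro k
        rw [Finset.card_image_of_injective _ (fun a b h => (Prod.mk.injEq _ _ _ _ ▸ h).2),
          Nat.card_Ico]
      rw [Finset.sum_congr rfl (fun k _ => h1 k), my_telescope N c.1 c.2.1, c.2.2]
    set F : Ω → ENNReal := fun ω => ∏ p ∈ Tc, X p ω with hF
    have hFm : Measurable F := Finset.measurable_prod _ (fun p _ => hXm p)
    have hFlint : ∫⁻ ω, F ω ∂ℙ = (ENNReal.ofReal M) ^ (t - c.1 0) := by
      rw [hF]
      rw [my_lintegral_prod X hXindep hXm Tc,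
        Finset.prod_congr rfl (fun p _ => hmom p), Finset.prod_const, hcard]
    set b := ENNReal.ofReal ((Real.exp (R * τ + d - R * (c.1 0 : ℝ))) ^ (s-1)) with hbdef
    have hb0 : b ≠ 0 :=
      ne_of_gt (ENNReal.ofReal_pos.mpr (Real.rpow_pos_of_pos (Real.exp_pos _) _))
    have hbtop : b ≠ ⊤ := ENNReal.ofReal_ne_top
    have hsub : ∀ᵐ ω ∂ℙ, ω ∈ A c → ω ∈ {ω | b ≤ F ω} := by
      filter_upwards [hG1] with ω hpos hmem
      have hPnn : ∀ p : Fin N × ℕ, (0:ℝ) ≤ 1 + γ p.1 p.2 ω := fun p => by linarith [hpos p]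
      have hP1 : (1:ℝ) ≤ ∏ p ∈ Tc, (1 + γ p.1 p.2 ω) := by
        have := Finset.prod_le_prod (s := Tc) (f := fun _ => (1:ℝ))
          (g := fun p => 1 + γ p.1 p.2 ω)
          (by intro i _; norm_num)
          (by intro p _; show (1:ℝ) ≤ 1 + γ p.1 p.2 ω; linarith [hpos p])
        simpa using this
      have hPle : ∏ p ∈ Tc, (1 + γ p.1 p.2 ω) ≤ Real.exp (R * τ + d - R * (c.1 0 : ℝ)) := by
        rw [hTprod (fun p => (1 + γ p.1 p.2 ω))]
        exact hmem
      have hFval : F ω = ENNReal.ofReal ((∏ p ∈ Tc, (1 + γ p.1 p.2 ω)) ^ (s-1)) := by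
        show ∏ p ∈ Tc, X p ω = _
        rw [← Real.finset_prod_rpow Tc _ (fun p _ => hPnn p) (s-1),
          ENNReal.ofReal_prod_of_nonneg (fun p _ => Real.rpow_nonneg (hPnn p) _)]
        rfl
      show b ≤ F ω
      rw [hFval, hbdef]
      exact ENNReal.ofReal_le_ofReal
        (Real.rpow_le_rpow_of_nonpos (by linarith) hPle (by linarith))
    calc ℙ (A c) ≤ ℙ {ω | b ≤ F ω} := measure_mono_ae hsub
      _ ≤ b⁻¹ * ∫⁻ ω, F ω ∂ℙ := by
          have h := mul_meas_ge_le_lintegral₀ (μ := ℙ) hFm.aemeasurable b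
          have h2 : b⁻¹ * (b * ℙ {ω | b ≤ F ω}) ≤ b⁻¹ * ∫⁻ ω, F ω ∂ℙ :=
            mul_le_mul_right h _
          rwa [← mul_assoc, ENNReal.inv_mul_cancel hb0 hbtop, one_mul] at h2
      _ = ENNReal.ofReal ((Real.exp (R * τ + d - R * (c.1 0 : ℝ))) ^ (1-s))
            * (ENNReal.ofReal M) ^ (t - c.1 0) := by
          rw [hFlint, hbdef, ← ENNReal.ofReal_inv_of_pos
            (Real.rpow_pos_of_pos (Real.exp_pos _) _)]
          congr 2
          rw [show (1-s) = -(s-1) by ring, Real.rpow_neg (Real.exp_pos _).le]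
      _ = ENNReal.ofReal (Real.exp ((R * τ + d - R * (t:ℝ)) * (1-s)))
            * (ENNReal.ofReal (V s)) ^ (t - c.1 0) := by
          rw [← Real.exp_mul]
          have hsplit : (R * τ + d - R * ((c.1 0 : ℕ):ℝ)) * (1-s)
              = (R * τ + d - R * (t:ℝ)) * (1-s) + ((t - c.1 0 : ℕ):ℝ) * ((1-s)*R) := by
            rw [Nat.cast_sub hut]
            ring
          rw [hsplit, Real.exp_add, Real.exp_nat_mul,
            ENNReal.ofReal_mul (Real.exp_pos _).le,
            ENNReal.ofReal_pow (Real.exp_pos _).le, mul_assoc]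
          congr 1
          rw [← mul_pow, ← ENNReal.ofReal_mul (Real.exp_pos _).le, ← hVM]
  -- assemble
  rw [hEeq]
  have harith : Real.exp ((R * τ + d - R * (t:ℝ)) * (1-s)) * ((1 - V s)⁻¹) ^ N = ε := by
    have h1 : R * (τ:ℝ) + d - R * (t:ℝ) = d - R * TD := by
      rw [ht]; push_cast; ring
    have h2 : (d - R * (TD:ℝ)) * (1-s) = (N:ℝ) * Real.log (1 - V s) + Real.log ε := by
      rw [hdef]
      field_simp
      ring
    rw [h1, h2, Real.exp_add, Real.exp_nat_mul, Real.exp_log h1V, Real.exp_log hε.1,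
      inv_pow]
    rw [mul_comm ((1 - V s) ^ N) ε, mul_assoc,
      mul_inv_cancel₀ (pow_ne_zero N (ne_of_gt h1V)), mul_one]
  calc ℙ {ω | D t ω ≤ R * τ + d} ≤ ℙ (⋃ c, A c) := measure_mono_ae hincl
    _ ≤ ∑' c, ℙ (A c) := measure_iUnion_le A
    _ ≤ ∑' c : {c : Fin (N+1) → ℕ // Monotone c ∧ c (Fin.last N) = t},
          ENNReal.ofReal (Real.exp ((R * τ + d - R * (t:ℝ)) * (1-s)))
            * (ENNReal.ofReal (V s)) ^ (t - c.1 0) := ENNReal.tsum_le_tsum hbound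
    _ = ENNReal.ofReal (Real.exp ((R * τ + d - R * (t:ℝ)) * (1-s)))
          * ∑' c : {c : Fin (N+1) → ℕ // Monotone c ∧ c (Fin.last N) = t},
            (ENNReal.ofReal (V s)) ^ (t - c.1 0) := ENNReal.tsum_mul_left
    _ ≤ ENNReal.ofReal (Real.exp ((R * τ + d - R * (t:ℝ)) * (1-s)))
          * ∑' v : Fin N → ℕ, (ENNReal.ofReal (V s)) ^ (∑ k, v k) := by
        apply mul_le_mul_right
        have hxx : ∀ c : {c : Fin (N+1) → ℕ // Monotone c ∧ c (Fin.last N) = t},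
            (ENNReal.ofReal (V s)) ^ (t - c.1 0)
              = (fun v : Fin N → ℕ => (ENNReal.ofReal (V s)) ^ (∑ k, v k))
                  (fun k => c.1 k.succ - c.1 k.castSucc) := by
          intro c
          simp only
          rw [my_telescope N c.1 c.2.1, c.2.2]
        rw [tsum_congr hxx]
        exact ENNReal.tsum_comp_le_tsum_of_injective (my_chain_inj N t) _
    _ = ENNReal.ofReal (Real.exp ((R * τ + d - R * (t:ℝ)) * (1-s)))
          * ((1 - ENNReal.ofReal (V s))⁻¹) ^ N := by rw [my_tsum_pow]
    _ = ENNReal.ofReal ε := by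
        rw [show (1 : ENNReal) - ENNReal.ofReal (V s) = ENNReal.ofReal (1 - V s) by
            rw [ENNReal.ofReal_sub 1 hV0, ENNReal.ofReal_one],
          ← ENNReal.ofReal_inv_of_pos h1V, ← ENNReal.ofReal_pow (by positivity),
          ← ENNReal.ofReal_mul (Real.exp_pos _).le, harith]
end
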